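/- If in a contraction sequence of the static expansion graph 𝒢_→ there is a black edge between classes v and w (i.e., every vertex of v(𝒢) is adjacent in 𝒢_→ to every vertex of w(𝒢), and both are nonempty), and the corresponding edge is red in the contraction of the structure S(𝒢) (i.e., the adjacency between v(𝒢) and w(𝒢) mixes the relations adj and succ), then there exist a vertex u ∈ V and a time t with (u,t) ∈ v(𝒢) and (u,t') ∈ w(𝒢) for some t' ∈ {t−1, t+1}. -/

import Mathlib

open SimpleGraph

/-- A temporal graph: a sequence of snapshot graphs over a common vertex set. -/
structure TemporalGraph (V : Type) (τ : ℕ) where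
  snapshot : Fin τ → SimpleGraph V

namespace TemporalGraph

variable {V : Type} {τ : ℕ}

/-- The static expansion graph `𝒢_→` on `V × Fin τ`. -/
def expansion (𝒢 : TemporalGraph V τ) : SimpleGraph (V × Fin τ) :=
  SimpleGraph.fromRel (fun a b =>
    (a.2 = b.2 ∧ (𝒢.snapshot a.2).Adj a.1 b.1) ∨
    (a.1 = b.1 ∧ (a.2 : ℕ) + 1 = (b.2 : ℕ)))

/-- The union graph `𝒢_↓`. -/
def unionGraph (𝒢 : TemporalGraph V τ) : SimpleGraph V := ⨆ t, 𝒢.snapshot t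

end TemporalGraph

/-- A tree decomposition of a graph. -/
structure TreeDecomp {V : Type} (G : SimpleGraph V) where
  ι : Type
  tree : SimpleGraph ι
  isTree : tree.IsTree
  bag : ι → Finset V
  cover : ∀ v : V, ∃ i, v ∈ bag i
  edgeCover : ∀ ⦃u v : V⦄, G.Adj u v → ∃ i, u ∈ bag i ∧ v ∈ bag i
  coherent : ∀ v : V, (tree.induce {i | v ∈ bag i}).Connected

/-- `G` has a tree decomposition of width at most `w`. -/
def TreewidthLE {V : Type} (G : SimpleGraph V) (w : ℕ) : Prop :=
  ∃ d : TreeDecomp G, ∀ i, (d.bag i).card ≤ w + 1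

/-- The tree-width of `G`, as an extended natural number. -/
noncomputable def treewidth {V : Type} (G : SimpleGraph V) : ℕ∞ :=
  sInf {w : ℕ∞ | ∃ n : ℕ, TreewidthLE G n ∧ w = n}

/-- Homogeneity of a pair of sets in a graph: complete or anticomplete. -/
def homog {α : Type} (G : SimpleGraph α) (X Y : Set α) : Prop :=
  (∀ x ∈ X, ∀ y ∈ Y, G.Adj x y) ∨ (∀ x ∈ X, ∀ y ∈ Y, ¬ G.Adj x y)

/-- A contraction sequence: a sequence of partitions from singletons to the
trivial partition, each step merging exactly two parts. -/
structure ContractionSeq (α : Type) where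
  n : ℕ
  P : Fin (n + 1) → Set (Set α)
  isPartition : ∀ i, Setoid.IsPartition (P i)
  first : P 0 = {S | ∃ v : α, S = {v}}
  last : P (Fin.last n) = {Set.univ}
  step : ∀ i : Fin n, ∃ X Y, X ∈ P i.castSucc ∧ Y ∈ P i.castSucc ∧ X ≠ Y ∧
    P i.succ = insert (X ∪ Y) (P i.castSucc \ {X, Y})

/-- Every part has at most `d` red (non-homogeneous) neighbours throughout. -/
def ContractionSeq.RedDegLE {α : Type} (c : ContractionSeq α)
    (hom : Set α → Set α → Prop) (d : ℕ) : Prop :=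
  ∀ i, ∀ X ∈ c.P i, {Y | Y ∈ c.P i ∧ Y ≠ X ∧ ¬ hom X Y}.ncard ≤ d

/-- `G` admits a `d`-contraction sequence. -/
def TwinwidthLE {α : Type} (G : SimpleGraph α) (d : ℕ) : Prop :=
  ∃ c : ContractionSeq α, c.RedDegLE (homog G) d

/-- The twin-width of `G`, as an extended natural number. -/
noncomputable def twinwidth {α : Type} (G : SimpleGraph α) : ℕ∞ :=
  sInf {w : ℕ∞ | ∃ d : ℕ, TwinwidthLE G d ∧ w = d}

/-- Homogeneity of a pair of sets with respect to two relations. -/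
def homogPair {α : Type} (G₁ G₂ : SimpleGraph α) (X Y : Set α) : Prop :=
  (∀ x ∈ X, ∀ y ∈ Y, G₁.Adj x y) ∨ (∀ x ∈ X, ∀ y ∈ Y, G₂.Adj x y) ∨
  (∀ x ∈ X, ∀ y ∈ Y, ¬ G₁.Adj x y ∧ ¬ G₂.Adj x y)

/-- The local (adj) edges of the static expansion, as a graph. -/
def adjGraph {V : Type} {τ : ℕ} (𝒢 : TemporalGraph V τ) :
    SimpleGraph (V × Fin τ) :=
  SimpleGraph.fromRel (fun a b => a.2 = b.2 ∧ (𝒢.snapshot a.2).Adj a.1 b.1)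

/-- The temporal (succ) edges of the static expansion, as a graph. -/
def succGraph {V : Type} {τ : ℕ} (𝒢 : TemporalGraph V τ) :
    SimpleGraph (V × Fin τ) :=
  SimpleGraph.fromRel (fun a b => a.1 = b.1 ∧ (a.2 : ℕ) + 1 = (b.2 : ℕ))

theorem TemporalGraph.expansion_eq_adjGraph_sup_succGraph {V : Type} {τ : ℕ}
    (𝒢 : TemporalGraph V τ) : 𝒢.expansion = adjGraph 𝒢 ⊔ succGraph 𝒢 := by
  ext a b
  simp only [TemporalGraph.expansion, adjGraph, succGraph, sup_adj, fromRel_adj]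
  tauto

theorem succGraph_adj_iff {V : Type} {τ : ℕ} (𝒢 : TemporalGraph V τ) (a b : V × Fin τ) :
    (succGraph 𝒢).Adj a b ↔
      a.1 = b.1 ∧ ((b.2 : ℕ) = (a.2 : ℕ) + 1 ∨ (a.2 : ℕ) = (b.2 : ℕ) + 1) := by
  rw [succGraph, fromRel_adj]
  constructor
  · rintro ⟨-, ⟨hu, ht⟩ | ⟨hu, ht⟩⟩
    · exact ⟨hu, Or.inl ht.symm⟩
    · exact ⟨hu.symm, Or.inr ht.symm⟩
  · rintro ⟨hu, ht | ht⟩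
    · exact ⟨fun h => by subst h; omega, Or.inl ⟨hu, ht.symm⟩⟩
    · exact ⟨fun h => by subst h; omega, Or.inr ⟨hu.symm, ht.symm⟩⟩

theorem mixed_black_edge_gives_succ_pair_general {V : Type} {τ : ℕ}
    (𝒢 : TemporalGraph V τ) (X Y : Set (V × Fin τ))
    (hblack : ∀ a ∈ X, ∀ b ∈ Y, 𝒢.expansion.Adj a b)
    (hmix : ¬ homogPair (adjGraph 𝒢) (succGraph 𝒢) X Y) :
    ∃ (u : V) (t t' : Fin τ), (u, t) ∈ X ∧ (u, t') ∈ Y ∧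
      ((t' : ℕ) = (t : ℕ) + 1 ∨ (t : ℕ) = (t' : ℕ) + 1) := by
  obtain ⟨x, hx, y, hy, hxy⟩ : ∃ x ∈ X, ∃ y ∈ Y, ¬ (adjGraph 𝒢).Adj x y := by
    by_contra! h
    exact hmix (Or.inl h)
  have hsucc : (succGraph 𝒢).Adj x y := by
    have h := hblack x hx y hy
    rw [TemporalGraph.expansion_eq_adjGraph_sup_succGraph, sup_adj] at h
    exact h.resolve_left hxy
  obtain ⟨hu, ht⟩ := (succGraph_adj_iff 𝒢 x y).1 hsucc
  exact ⟨x.1, x.2, y.2, hx, by rw [hu]; exact hy, ht⟩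

/-- if two disjoint nonempty classes X, Y are fully adjacent in
𝒢_→ (a black edge) but their adjacency mixes the relations adj and succ (a red
edge in S(𝒢)), then some vertex u has a copy (u,t) in X and a copy (u,t') in Y
with t' ∈ {t−1, t+1}. -/
theorem mixed_black_edge_gives_succ_pair {V : Type} {τ : ℕ}
    (𝒢 : TemporalGraph V τ) (X Y : Set (V × Fin τ))
    (hX : X.Nonempty) (hY : Y.Nonempty) (hXY : Disjoint X Y)
    (hblack : ∀ a ∈ X, ∀ b ∈ Y, 𝒢.expansion.Adj a b)
    (hmix : ¬ homogPair (adjGraph 𝒢) (succGraph 𝒢) X Y) :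
    ∃ (u : V) (t t' : Fin τ), (u, t) ∈ X ∧ (u, t') ∈ Y ∧
      ((t' : ℕ) = (t : ℕ) + 1 ∨ (t : ℕ) = (t' : ℕ) + 1) :=
  mixed_black_edge_gives_succ_pair_general 𝒢 X Y hblack hmix
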